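/- The Legendre–Fenchel-type transform Û(π,ξ) := sup_{x > x̲, s > s̲} [U(x,s) − xπ − sξ] of the Stone–Geary utility U(x,s) = ((x−x̲)^{1−β}(s−s̲)^β)^{1−γ}/(1−γ) equals −x̲π − s̲ξ + (1/γ̂)((π/(1−β))^{1−β}(ξ/β)^β)^{−γ̂}, where γ̂ = (1−γ)/γ, for all π, ξ > 0. -/

import Mathlib

open Real

/-!
Write `x = x̲ + a`, `s = s̲ + b` and `u = a^{1-β} b^β`. Weighted AM–GM with weights `1-β, β`
bounds the expenditure `aπ + bξ` below by `K u`, where `K = (π/(1-β))^{1-β} (ξ/β)^β`, with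
equality along the demand ray `a = (1-β)t/π`, `b = βt/ξ`. This leaves the one-variable problem
`sup_{u>0} u^{1-γ}/(1-γ) - K u`, which AM–GM with weights `1/γ, (γ-1)/γ` solves: its value is
`γ/(1-γ) K^{(γ-1)/γ}`, attained at `u = K^{-1/γ}`.
-/

noncomputable def cobbDouglasPriceIndex (β p q : ℝ) : ℝ :=
  (p / (1 - β)) ^ (1 - β) * (q / β) ^ β

section CobbDouglas

variable {β p q : ℝ}

lemma cobbDouglasPriceIndex_pos (hβ0 : 0 < β) (hβ1 : β < 1) (hp : 0 < p) (hq : 0 < q) :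
    0 < cobbDouglasPriceIndex β p q := by
  unfold cobbDouglasPriceIndex
  have : 0 < 1 - β := by linarith
  positivity

lemma cobbDouglasPriceIndex_mul_le (hβ0 : 0 < β) (hβ1 : β < 1) (hp : 0 < p) (hq : 0 < q)
    {a b : ℝ} (ha : 0 ≤ a) (hb : 0 ≤ b) :
    cobbDouglasPriceIndex β p q * (a ^ (1 - β) * b ^ β) ≤ a * p + b * q := by
  have hβ' : 0 < 1 - β := by linarith
  have amgm := geom_mean_le_arith_mean2_weighted (p₁ := a * p / (1 - β)) (p₂ := b * q / β)
    hβ'.le hβ0.le (by positivity) (by positivity) (by ring)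
  have hgeom : (a * p / (1 - β)) ^ (1 - β) * (b * q / β) ^ β
      = cobbDouglasPriceIndex β p q * (a ^ (1 - β) * b ^ β) := by
    rw [mul_div_assoc, mul_div_assoc, mul_rpow ha (by positivity), mul_rpow hb (by positivity),
      cobbDouglasPriceIndex]
    ring
  have harith : (1 - β) * (a * p / (1 - β)) + β * (b * q / β) = a * p + b * q := by
    field_simp
  rwa [hgeom, harith] at amgm

lemma cobbDouglasPriceIndex_mul_demand (hβ0 : 0 < β) (hβ1 : β < 1) (hp : 0 < p) (hq : 0 < q)
    {t : ℝ} (ht : 0 ≤ t) :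
    cobbDouglasPriceIndex β p q * (((1 - β) * t / p) ^ (1 - β) * (β * t / q) ^ β) = t := by
  have hβ' : 0 < 1 - β := by linarith
  have hsplit : ((1 - β) * t / p) ^ (1 - β) * (β * t / q) ^ β
      = ((p / (1 - β)) ^ (1 - β))⁻¹ * ((q / β) ^ β)⁻¹ * (t ^ (1 - β) * t ^ β) := by
    rw [show (1 - β) * t / p = (p / (1 - β))⁻¹ * t by field_simp,
      show β * t / q = (q / β)⁻¹ * t by field_simp,
      mul_rpow (by positivity) ht, mul_rpow (by positivity) ht,
      inv_rpow (by positivity), inv_rpow (by positivity)]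
    ring
  have htt : t ^ (1 - β) * t ^ β = t := by
    rw [← rpow_add' ht (by norm_num), sub_add_cancel, rpow_one]
  have hp' : (p / (1 - β)) ^ (1 - β) ≠ 0 := by positivity
  have hq' : (q / β) ^ β ≠ 0 := by positivity
  rw [hsplit, htt, cobbDouglasPriceIndex]
  field_simp

end CobbDouglas

section PowerUtility

variable {γ K : ℝ}

lemma rpow_div_one_sub_sub_mul_le (hγ : 1 < γ) (hK : 0 < K) {u : ℝ} (hu : 0 < u) :
    u ^ (1 - γ) / (1 - γ) - K * u ≤ γ / (1 - γ) * K ^ ((γ - 1) / γ) := by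
  have hγ0 : 0 < γ := by linarith
  have hγ1 : 1 - γ ≠ 0 := by linarith
  have amgm := geom_mean_le_arith_mean2_weighted (w₁ := 1 / γ) (w₂ := (γ - 1) / γ)
    (p₁ := u ^ (1 - γ)) (p₂ := K * u) (by positivity) (div_nonneg (by linarith) hγ0.le)
    (by positivity) (by positivity) (by field_simp; ring)
  have hgeom : (u ^ (1 - γ)) ^ (1 / γ) * (K * u) ^ ((γ - 1) / γ) = K ^ ((γ - 1) / γ) := by
    rw [← rpow_mul hu.le, mul_rpow hK.le hu.le, mul_left_comm, ← rpow_add hu,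
      show (1 - γ) * (1 / γ) + (γ - 1) / γ = 0 by ring, rpow_zero, mul_one]
  rw [hgeom] at amgm
  rw [show u ^ (1 - γ) / (1 - γ) - K * u
      = γ * (1 / γ * u ^ (1 - γ) + (γ - 1) / γ * (K * u)) / (1 - γ) by field_simp; ring,
    show γ / (1 - γ) * K ^ ((γ - 1) / γ) = γ * K ^ ((γ - 1) / γ) / (1 - γ) by ring,
    div_le_div_right_of_neg (by linarith)]
  exact mul_le_mul_of_nonneg_left amgm hγ0.le

lemma rpow_div_one_sub_sub_mul_at_rpow_neg_inv (hγ : 1 < γ) (hK : 0 < K) :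
    (K ^ (-(1 / γ))) ^ (1 - γ) / (1 - γ) - K * K ^ (-(1 / γ))
      = γ / (1 - γ) * K ^ ((γ - 1) / γ) := by
  have hγ0 : γ ≠ 0 := (zero_lt_one.trans hγ).ne'
  have hγ1 : 1 - γ ≠ 0 := by linarith
  have hpow : (K ^ (-(1 / γ))) ^ (1 - γ) = K ^ ((γ - 1) / γ) := by
    rw [← rpow_mul hK.le]
    congr 1
    field_simp
    ring
  have hmul : K * K ^ (-(1 / γ)) = K ^ ((γ - 1) / γ) := by
    rw [mul_comm, ← rpow_add_one hK.ne']
    congr 1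
    field_simp
    ring
  rw [hpow, hmul]
  field_simp
  ring

end PowerUtility

theorem stone_geary_legendre_transform_general (β γ xbar sbar pp ξ : ℝ)
    (hβ0 : 0 < β) (hβ1 : β < 1) (hγ : 1 < γ)
    (hpp : 0 < pp) (hξ : 0 < ξ) :
    IsLUB {v : ℝ | ∃ x s : ℝ, xbar < x ∧ sbar < s ∧
        v = ((x - xbar) ^ (1 - β) * (s - sbar) ^ β) ^ (1 - γ) / (1 - γ)
            - x * pp - s * ξ}
      (-xbar * pp - sbar * ξ +
        (1 / ((1 - γ) / γ)) *
          ((pp / (1 - β)) ^ (1 - β) * (ξ / β) ^ β) ^ (-((1 - γ) / γ))) := by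
  rw [one_div_div, show -((1 - γ) / γ) = (γ - 1) / γ by ring]
  change IsLUB _ (_ + _ * cobbDouglasPriceIndex β pp ξ ^ _)
  set K := cobbDouglasPriceIndex β pp ξ
  have hK : 0 < K := cobbDouglasPriceIndex_pos hβ0 hβ1 hpp hξ
  refine ⟨?upper, fun c hc => hc ?attained⟩
  case upper =>
    rintro v ⟨x, s, hxx, hss, rfl⟩
    have ha : 0 < x - xbar := by linarith
    have hb : 0 < s - sbar := by linarith
    have hcost := cobbDouglasPriceIndex_mul_le hβ0 hβ1 hpp hξ ha.le hb.le
    have hutil := rpow_div_one_sub_sub_mul_le hγ hK (u := (x - xbar) ^ (1 - β) * (s - sbar) ^ β)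
      (by positivity)
    linarith
  case attained =>
    set t := K * K ^ (-(1 / γ))
    have ht : 0 < t := by positivity
    have hdemand : ((1 - β) * t / pp) ^ (1 - β) * (β * t / ξ) ^ β = K ^ (-(1 / γ)) :=
      mul_left_cancel₀ hK.ne' (cobbDouglasPriceIndex_mul_demand hβ0 hβ1 hpp hξ ht.le)
    have hβ' : 0 < 1 - β := by linarith
    refine ⟨xbar + (1 - β) * t / pp, sbar + β * t / ξ, lt_add_of_pos_right _ (by positivity),
      lt_add_of_pos_right _ (by positivity), ?_⟩
    rw [add_sub_cancel_left, add_sub_cancel_left, hdemand,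
      ← rpow_div_one_sub_sub_mul_at_rpow_neg_inv hγ hK]
    field_simp
    ring

/-- The Legendre–Fenchel-type transform
`Û(pp,ξ) := sup_{x > x̲, s > s̲} [U(x,s) − xpp − sξ]` of the Stone–Geary utility
`U(x,s) = ((x−x̲)^{1−β}(s−s̲)^β)^{1−γ}/(1−γ)` equals
`−x̲pp − s̲ξ + (1/γ̂)((pp/(1−β))^{1−β}(ξ/β)^β)^{−γ̂}` with `γ̂ = (1−γ)/γ`,
for all `pp, ξ > 0`. -/
theorem stone_geary_legendre_transform (β γ xbar sbar pp ξ : ℝ)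
    (hβ0 : 0 < β) (hβ1 : β < 1) (hγ : 1 < γ)
    (hx : 0 < xbar) (hs : 0 < sbar) (hpp : 0 < pp) (hξ : 0 < ξ) :
    IsLUB {v : ℝ | ∃ x s : ℝ, xbar < x ∧ sbar < s ∧
        v = ((x - xbar) ^ (1 - β) * (s - sbar) ^ β) ^ (1 - γ) / (1 - γ)
            - x * pp - s * ξ}
      (-xbar * pp - sbar * ξ +
        (1 / ((1 - γ) / γ)) *
          ((pp / (1 - β)) ^ (1 - β) * (ξ / β) ^ β) ^ (-((1 - γ) / γ))) :=
  stone_geary_legendre_transform_general β γ xbar sbar pp ξ hβ0 hβ1 hγ hpp hξ
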